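/- Let m₁, m₂, ν₁, ν₂ > 0 satisfy m₁ + ν₁ ≥ m₂ + ν₂ and m₁/ν₁ ≥ m₂/ν₂. Then for all u > 0 and 0 < w < 1, h(u,w) ≤ K₀ · u^{(m₁+m₂)/2−1} · w^{m₁/2−1} · (1−w)^{m₂/2−1} · (1 + m₂u/ν₂)^{−(m₂+ν₂)/2}, where h(u,w) = K₀ · u^{(m₁+m₂)/2−1} · w^{m₁/2−1} · (1−w)^{m₂/2−1} · (1 + m₁uw/ν₁)^{−(m₁+ν₁)/2} · (1 + m₂u(1−w)/ν₂)^{−(m₂+ν₂)/2}. -/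

import Mathlib

open Real MeasureTheory Set

/-- Beta function `B(a,b) = Γ(a)Γ(b)/Γ(a+b)`. -/
noncomputable def Beta (a b : ℝ) : ℝ := Gamma a * Gamma b / Gamma (a + b)

/-- The normalizing constant `K₀`. -/
noncomputable def K₀ (m₁ m₂ ν₁ ν₂ : ℝ) : ℝ :=
  (m₁ / ν₁) ^ (m₁ / 2) * (m₂ / ν₂) ^ (m₂ / 2) /
    (Beta (m₁ / 2) (ν₁ / 2) * Beta (m₂ / 2) (ν₂ / 2))

/-! The two heavy-tail factors are controlled by the single one: since `m₁/ν₁ ≥ m₂/ν₂`,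
`1 + (m₂/ν₂) u ≤ (1 + (m₁/ν₁) u w) (1 + (m₂/ν₂) u (1 - w))`, and since `m₁ + ν₁ ≥ m₂ + ν₂`,
the first factor on the right may carry the larger exponent `(m₁ + ν₁)/2`. -/

lemma Beta_pos {a b : ℝ} (ha : 0 < a) (hb : 0 < b) : 0 < Beta a b :=
  div_pos (mul_pos (Gamma_pos_of_pos ha) (Gamma_pos_of_pos hb))
    (Gamma_pos_of_pos (add_pos ha hb))

lemma K₀_pos {m₁ m₂ ν₁ ν₂ : ℝ} (hm₁ : 0 < m₁) (hm₂ : 0 < m₂) (hν₁ : 0 < ν₁) (hν₂ : 0 < ν₂) :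
    0 < K₀ m₁ m₂ ν₁ ν₂ := by
  have hB₁ := Beta_pos (half_pos hm₁) (half_pos hν₁)
  have hB₂ := Beta_pos (half_pos hm₂) (half_pos hν₂)
  unfold K₀
  positivity

lemma one_add_mul_add_le_mul {α β s t : ℝ} (hβ : 0 ≤ β) (hβα : β ≤ α) (hs : 0 ≤ s)
    (ht : 0 ≤ t) : 1 + β * (s + t) ≤ (1 + α * s) * (1 + β * t) := by
  nlinarith [mul_nonneg (mul_nonneg (hβ.trans hβα) hs) (mul_nonneg hβ ht),
    mul_le_mul_of_nonneg_right hβα hs]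

lemma one_add_mul_rpow_neg_mul_le {α β s t p q : ℝ} (hβ : 0 ≤ β) (hβα : β ≤ α) (hs : 0 ≤ s)
    (ht : 0 ≤ t) (hq : 0 ≤ q) (hqp : q ≤ p) :
    (1 + α * s) ^ (-p) * (1 + β * t) ^ (-q) ≤ (1 + β * (s + t)) ^ (-q) := by
  have hαs : 1 ≤ 1 + α * s := le_add_of_nonneg_right (mul_nonneg (hβ.trans hβα) hs)
  have hβt : 1 ≤ 1 + β * t := le_add_of_nonneg_right (mul_nonneg hβ ht)
  have hβst : 0 < 1 + β * (s + t) := by positivity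
  calc (1 + α * s) ^ (-p) * (1 + β * t) ^ (-q)
      ≤ (1 + α * s) ^ (-q) * (1 + β * t) ^ (-q) := by
        gcongr
    _ = ((1 + α * s) * (1 + β * t)) ^ (-q) := (mul_rpow (by linarith) (by linarith)).symm
    _ ≤ (1 + β * (s + t)) ^ (-q) :=
        rpow_le_rpow_of_nonpos hβst (one_add_mul_add_le_mul hβ hβα hs ht) (neg_nonpos.2 hq)

/-- Upper bound on the joint density `h(u,w)`:  if `m₁ + ν₁ ≥ m₂ + ν₂` and
`m₁/ν₁ ≥ m₂/ν₂`, then for `u > 0` and `0 < w < 1`,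
`h(u,w) ≤ K₀ u^{(m₁+m₂)/2−1} w^{m₁/2−1} (1−w)^{m₂/2−1} (1 + m₂u/ν₂)^{−(m₂+ν₂)/2}`. -/
theorem hDens_upper_bound (m₁ m₂ ν₁ ν₂ : ℝ)
    (hm₁ : 0 < m₁) (hm₂ : 0 < m₂) (hν₁ : 0 < ν₁) (hν₂ : 0 < ν₂)
    (hsum : m₂ + ν₂ ≤ m₁ + ν₁) (hratio : m₂ / ν₂ ≤ m₁ / ν₁)
    (u w : ℝ) (hu : 0 < u) (hw0 : 0 < w) (hw1 : w < 1) :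
    K₀ m₁ m₂ ν₁ ν₂ * u ^ ((m₁ + m₂) / 2 - 1) * w ^ (m₁ / 2 - 1) * (1 - w) ^ (m₂ / 2 - 1) *
        (1 + m₁ * u * w / ν₁) ^ (-(m₁ + ν₁) / 2) *
        (1 + m₂ * u * (1 - w) / ν₂) ^ (-(m₂ + ν₂) / 2) ≤
      K₀ m₁ m₂ ν₁ ν₂ * u ^ ((m₁ + m₂) / 2 - 1) * w ^ (m₁ / 2 - 1) * (1 - w) ^ (m₂ / 2 - 1) *
        (1 + m₂ * u / ν₂) ^ (-(m₂ + ν₂) / 2) := by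
  have hK := K₀_pos hm₁ hm₂ hν₁ hν₂
  have hw : 0 < 1 - w := sub_pos.2 hw1
  have key := one_add_mul_rpow_neg_mul_le (by positivity) hratio (mul_pos hu hw0).le
    (mul_pos hu hw).le (by positivity : 0 ≤ (m₂ + ν₂) / 2)
    (by linarith : (m₂ + ν₂) / 2 ≤ (m₁ + ν₁) / 2)
  have hfirst : m₁ * u * w / ν₁ = m₁ / ν₁ * (u * w) := by ring
  have hsecond : m₂ * u * (1 - w) / ν₂ = m₂ / ν₂ * (u * (1 - w)) := by ring
  have hjoint : m₂ * u / ν₂ = m₂ / ν₂ * (u * w + u * (1 - w)) := by ring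
  rw [hfirst, hsecond, hjoint, neg_div, neg_div, mul_assoc]
  exact mul_le_mul_of_nonneg_left key (by positivity)
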